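/- arXiv:1804.09929 — 3 statements merged into one kernel-verified Lean document; each statement's English description precedes it below -/
import Mathlib

section
/- For every δ ∈ (0, 1/2), every interval of integers I = [N₁, N₂) of length L, and every index j such that q_{j+1} ≤ 2L, the number of integers n ∈ I with ‖n q_j α‖ ≤ δ satisfies Σ_{n=N₁}^{N₂-1} 1_{I_δ}({n q_j α}) ≤ 20·(δ + q_{j+1}^{-1})·L, where I_δ := [0, δ] ∪ [1−δ, 1] and {x} denotes the fractional part of x. -/
open MeasureTheory Filter
open scoped Classical

/-- The Gauss map. -/
noncomputable def gaussMap (x : ℝ) : ℝ := Int.fract x⁻¹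

/-- Partial quotients `a n` (`n ≥ 1`) of the continued fraction of `α ∈ (0,1)`:
`a n = ⌊1 / G^[n-1] α⌋`. -/
noncomputable def pquot (α : ℝ) : ℕ → ℕ
  | 0 => 0
  | n + 1 => ⌊(gaussMap^[n] α)⁻¹⌋.toNat

/-- Denominators `q n` of the convergents of the continued fraction of `α`:
`q 0 = 1`, `q 1 = a 1`, `q (n+2) = a (n+2) * q (n+1) + q n`. -/
noncomputable def cfDen (α : ℝ) : ℕ → ℕ
  | 0 => 1
  | 1 => pquot α 1
  | n + 2 => pquot α (n + 2) * cfDen α (n + 1) + cfDen α n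

/-- Ergodic (Birkhoff) sums `φ_N(x) = ∑_{j<N} φ(x + jα)` for the rotation by `α`. -/
noncomputable def birk (φ : ℝ → ℝ) (α : ℝ) (N : ℕ) (x : ℝ) : ℝ :=
  ∑ j ∈ Finset.range N, φ (x + j * α)

/-- Square of the L² norm on the circle `[0,1)`. -/
noncomputable def sqL2 (f : ℝ → ℝ) : ℝ := ∫ x in (0:ℝ)..1, (f x) ^ 2

/-- L² norm on the circle `[0,1)`. -/
noncomputable def normL2 (f : ℝ → ℝ) : ℝ := Real.sqrt (sqL2 f)

/-- Fourier coefficient `c_r(φ) = ∫₀¹ φ(x) e^{-2πirx} dx`. -/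
noncomputable def fCoeff (φ : ℝ → ℝ) (r : ℤ) : ℂ :=
  ∫ x in (0:ℝ)..1, (φ x : ℂ) * Complex.exp (-(2 * Real.pi * Complex.I * r * x))

/-- `γ_r(φ) = r · c_r(φ)`. -/
noncomputable def gam (φ : ℝ → ℝ) (r : ℤ) : ℂ := (r : ℂ) * fCoeff φ r

/-- `K(φ) = sup_{r ≠ 0} |γ_r(φ)|`. -/
noncomputable def Kc (φ : ℝ → ℝ) : ℝ :=
  ⨆ r : {r : ℤ // r ≠ 0}, ‖gam φ r.1‖

/-- Total variation of `f` on `[0,1)`. -/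
noncomputable def variation (f : ℝ → ℝ) : ℝ := (eVariationOn f (Set.Ico 0 1)).toReal

/-- The class 𝒞: 1-periodic, bounded variation on `[0,1)`, centered. -/
structure ClassC (φ : ℝ → ℝ) : Prop where
  periodic : Function.Periodic φ 1
  bv : BoundedVariationOn φ (Set.Ico 0 1)
  centered : (∫ x in (0:ℝ)..1, φ x) = 0

/-- Condition (H): a positive proportion of the `γ_{q_j}(φ)` stay bounded away from `0`. -/
def CondH (α : ℝ) (φ : ℝ → ℝ) : Prop :=
  ∃ N₀ : ℕ, ∃ η θ₀ : ℝ, 0 < N₀ ∧ 0 < η ∧ 0 < θ₀ ∧ ∀ N : ℕ, N₀ ≤ N →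
    θ₀ ≤ (((Finset.Icc 1 N).filter
      fun j => η ≤ ‖gam φ (cfDen α j : ℤ)‖).card : ℝ) / (N : ℝ)

/-- `m(n) = ℓ` iff `n ∈ [q_ℓ, q_{ℓ+1})`. -/
noncomputable def mIdx (α : ℝ) (n : ℕ) : ℕ := sSup {ℓ : ℕ | cfDen α ℓ ≤ n}

/-- Distance to the nearest integer. -/
noncomputable def nint (x : ℝ) : ℝ := |x - (round x : ℝ)|

/-- The standard normal cumulative distribution function. -/
noncomputable def stdNormalCDF (x : ℝ) : ℝ :=
  ∫ u in Set.Iic x, Real.exp (-(u ^ 2) / 2) / Real.sqrt (2 * Real.pi)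

/-- Kolmogorov distance between the distribution of `g` (as a random variable on the
circle `[0,1)` with Lebesgue measure) and the standard normal distribution. -/
noncomputable def kolDistN (g : ℝ → ℝ) : ℝ :=
  ⨆ x : ℝ, |(volume {t : ℝ | t ∈ Set.Ico (0:ℝ) 1 ∧ g t ≤ x}).toReal - stdNormalCDF x|

/-- Hypothesis (A): polynomially bounded partial quotients. -/
def HypA (α : ℝ) : Prop :=
  ∃ A p : ℝ, 1 ≤ A ∧ 0 ≤ p ∧ ∀ n : ℕ, 1 ≤ n → (pquot α n : ℝ) ≤ A * (n : ℝ) ^ p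

/-!
Write `θ_j = α · G(α) ⋯ G^j(α)` with `G` the Gauss map. The recursions for `q_j` and `p_j`
give `q_j α - p_j = (-1)^j θ_j` and `q_{j+1} θ_j + q_j θ_{j+1} = 1`, hence
`1/(2 q_{j+1}) < θ_j < 1/q_{j+1}`. Since `n q_j α ≡ ± n θ_j (mod 1)`, we are counting the `n` in an
interval of length `L` with `n θ_j` within `δ` of an integer. The integers nearest to these
`n θ_j` take at most `L θ_j + 2δ + 1` values, each one near at most `2δ/θ_j + 1` of the points
`n θ_j`, and with `q_{j+1} ≤ 2L` this product is at most `20 (δ + q_{j+1}⁻¹) L`.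
-/

open Finset

-- The numerators `p_n` of the convergents.
noncomputable def cfNum (α : ℝ) : ℕ → ℤ
  | 0 => 0
  | 1 => 1
  | n + 2 => (pquot α (n + 2) : ℤ) * cfNum α (n + 1) + cfNum α n

-- Shifted by one: `gaussProd α (n + 1) = θ_n = |q_n α - p_n|` (see `cfDen_mul_sub_cfNum`).
noncomputable def gaussProd (α : ℝ) (n : ℕ) : ℝ := ∏ k ∈ range n, gaussMap^[k] α

section ContinuedFraction

variable {α : ℝ}

lemma irrational_gaussMap_iterate (hirr : Irrational α) (n : ℕ) :
    Irrational (gaussMap^[n] α) := by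
  induction n with
  | zero => exact hirr
  | succ n ih =>
    rw [Function.iterate_succ_apply']
    exact ih.inv.sub_intCast _

lemma gaussMap_iterate_mem_Ioo (hirr : Irrational α) (hmem : α ∈ Set.Ioo (0 : ℝ) 1) :
    ∀ n, gaussMap^[n] α ∈ Set.Ioo (0 : ℝ) 1
  | 0 => hmem
  | n + 1 => by
    rw [Function.iterate_succ_apply']
    exact ⟨Int.fract_pos.2 ((irrational_gaussMap_iterate hirr n).inv.ne_int _),
      Int.fract_lt_one _⟩

lemma pquot_succ_eq_floor (hirr : Irrational α) (hmem : α ∈ Set.Ioo (0 : ℝ) 1) (n : ℕ) :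
    (pquot α (n + 1) : ℤ) = ⌊(gaussMap^[n] α)⁻¹⌋ :=
  Int.toNat_of_nonneg <|
    Int.floor_nonneg.2 (inv_pos.2 (gaussMap_iterate_mem_Ioo hirr hmem n).1).le

lemma one_le_pquot_succ (hirr : Irrational α) (hmem : α ∈ Set.Ioo (0 : ℝ) 1) (n : ℕ) :
    1 ≤ pquot α (n + 1) := by
  obtain ⟨hpos, hlt⟩ := gaussMap_iterate_mem_Ioo hirr hmem n
  have h : (1 : ℤ) ≤ ⌊(gaussMap^[n] α)⁻¹⌋ :=
    Int.le_floor.2 (by simpa using ((one_lt_inv₀ hpos).2 hlt).le)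
  rw [← pquot_succ_eq_floor hirr hmem] at h
  exact_mod_cast h

lemma gaussMap_iterate_mul_succ (hirr : Irrational α) (hmem : α ∈ Set.Ioo (0 : ℝ) 1)
    (n : ℕ) :
    gaussMap^[n] α * gaussMap^[n + 1] α = 1 - pquot α (n + 1) * gaussMap^[n] α := by
  have hne := (gaussMap_iterate_mem_Ioo hirr hmem n).1.ne'
  have hfloor : ((pquot α (n + 1) : ℤ) : ℝ) = ⌊(gaussMap^[n] α)⁻¹⌋ := by
    rw [pquot_succ_eq_floor hirr hmem]
  rw [Function.iterate_succ_apply', gaussMap, Int.fract, ← hfloor]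
  push_cast
  field_simp

lemma gaussProd_pos (hirr : Irrational α) (hmem : α ∈ Set.Ioo (0 : ℝ) 1) (n : ℕ) :
    0 < gaussProd α n :=
  prod_pos fun k _ => (gaussMap_iterate_mem_Ioo hirr hmem k).1

lemma gaussProd_succ_lt (hirr : Irrational α) (hmem : α ∈ Set.Ioo (0 : ℝ) 1) (n : ℕ) :
    gaussProd α (n + 1) < gaussProd α n := by
  rw [gaussProd, prod_range_succ]
  exact mul_lt_of_lt_one_right (gaussProd_pos hirr hmem n)
    (gaussMap_iterate_mem_Ioo hirr hmem n).2

lemma gaussProd_add_two (hirr : Irrational α) (hmem : α ∈ Set.Ioo (0 : ℝ) 1) (n : ℕ) :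
    gaussProd α (n + 2) = gaussProd α n - pquot α (n + 1) * gaussProd α (n + 1) := by
  simp only [gaussProd, prod_range_succ, mul_assoc, gaussMap_iterate_mul_succ hirr hmem]
  ring

lemma cfDen_mono (hirr : Irrational α) (hmem : α ∈ Set.Ioo (0 : ℝ) 1) :
    Monotone (cfDen α) := by
  refine monotone_nat_of_le_succ fun n => ?_
  cases n with
  | zero => exact one_le_pquot_succ hirr hmem 0
  | succ n =>
    show cfDen α (n + 1) ≤ pquot α (n + 2) * cfDen α (n + 1) + cfDen α n
    nlinarith [one_le_pquot_succ hirr hmem (n + 1)]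

lemma cfDen_pos (hirr : Irrational α) (hmem : α ∈ Set.Ioo (0 : ℝ) 1) (n : ℕ) :
    0 < cfDen α n :=
  cfDen_mono hirr hmem n.zero_le

lemma cfDen_mul_sub_cfNum (hirr : Irrational α) (hmem : α ∈ Set.Ioo (0 : ℝ) 1) :
    ∀ n, (cfDen α n : ℝ) * α - cfNum α n = (-1) ^ n * gaussProd α (n + 1)
  | 0 => by simp [cfDen, cfNum, gaussProd]
  | 1 => by
    have h := gaussProd_add_two hirr hmem 0
    simp only [gaussProd, prod_range_zero] at h ⊢
    simp [cfDen, cfNum, h]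
  | n + 2 => by
    have h₀ := cfDen_mul_sub_cfNum hirr hmem n
    have h₁ := cfDen_mul_sub_cfNum hirr hmem (n + 1)
    have h := gaussProd_add_two hirr hmem (n + 1)
    simp only [cfDen, cfNum]
    push_cast
    linear_combination (pquot α (n + 2) : ℝ) * h₁ + h₀ - (-1) ^ n * h

lemma cfDen_succ_mul_add_cfDen_mul (hirr : Irrational α) (hmem : α ∈ Set.Ioo (0 : ℝ) 1) :
    ∀ n, (cfDen α (n + 1) : ℝ) * gaussProd α (n + 1) + cfDen α n * gaussProd α (n + 2) = 1
  | 0 => by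
    have h := gaussProd_add_two hirr hmem 0
    simp only [gaussProd, prod_range_zero] at h ⊢
    simp [cfDen, h]
  | n + 1 => by
    have ih := cfDen_succ_mul_add_cfDen_mul hirr hmem n
    have h := gaussProd_add_two hirr hmem (n + 1)
    simp only [cfDen]
    push_cast
    linear_combination ih + (cfDen α (n + 1) : ℝ) * h

lemma cfDen_succ_mul_gaussProd_succ_mem_Ioo (hirr : Irrational α)
    (hmem : α ∈ Set.Ioo (0 : ℝ) 1) (n : ℕ) :
    (cfDen α (n + 1) : ℝ) * gaussProd α (n + 1) ∈ Set.Ioo (1 / 2) 1 := by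
  have hsum := cfDen_succ_mul_add_cfDen_mul hirr hmem n
  have hq : (0 : ℝ) < cfDen α n := by exact_mod_cast cfDen_pos hirr hmem n
  have hqq : (cfDen α n : ℝ) ≤ cfDen α (n + 1) := by
    exact_mod_cast cfDen_mono hirr hmem n.le_succ
  have hθ := gaussProd_pos hirr hmem (n + 2)
  have hθθ := gaussProd_succ_lt hirr hmem (n + 1)
  constructor <;> nlinarith

lemma exists_abs_mul_gaussProd_sub_intCast_le (hirr : Irrational α)
    (hmem : α ∈ Set.Ioo (0 : ℝ) 1) {n j : ℕ} {δ : ℝ}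
    (h : ∃ m : ℤ, |((n * cfDen α j : ℕ) : ℝ) * α - m| ≤ δ) :
    ∃ m : ℤ, |(n : ℝ) * gaussProd α (j + 1) - m| ≤ δ := by
  obtain ⟨m, hm⟩ := h
  -- `n θ_j = ± (n q_j α - n p_j)`
  refine ⟨(-1) ^ j * (m - n * cfNum α j), ?_⟩
  have hid := cfDen_mul_sub_cfNum hirr hmem j
  have hsign : ((-1 : ℝ) ^ j) * (-1) ^ j = 1 := pow_mul_pow_eq_one j (by norm_num)
  calc |(n : ℝ) * gaussProd α (j + 1) - ((-1) ^ j * (m - n * cfNum α j) : ℤ)|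
      = |(-1) ^ j * (((n * cfDen α j : ℕ) : ℝ) * α - m)| := by
        congr 1
        push_cast
        linear_combination (-(n : ℝ) * (-1) ^ j) * hid - n * gaussProd α (j + 1) * hsign
    _ ≤ δ := by simpa [abs_mul] using hm

end ContinuedFraction

lemma card_le_of_forall_intCast_mem_Icc {S : Finset ℤ} {a b : ℝ} (hab : a ≤ b)
    (hS : ∀ n ∈ S, (n : ℝ) ∈ Set.Icc a b) : (#S : ℝ) ≤ b - a + 1 := by
  have hsub : S ⊆ Icc ⌈a⌉ ⌊b⌋ := fun n hn =>
    mem_Icc.2 ⟨Int.ceil_le.2 (hS n hn).1, Int.le_floor.2 (hS n hn).2⟩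
  have hcard : (#S : ℤ) ≤ max (⌊b⌋ + 1 - ⌈a⌉) 0 := by
    rw [← Int.toNat_eq_max, ← Int.card_Icc]
    exact_mod_cast card_le_card hsub
  have hcardℝ : (#S : ℝ) ≤ max ((⌊b⌋ : ℝ) + 1 - ⌈a⌉) 0 := by exact_mod_cast hcard
  refine hcardℝ.trans (max_le ?_ (by linarith))
  linarith [Int.floor_le b, Int.le_ceil a]

lemma card_le_of_forall_mul_mem_Icc {S : Finset ℕ} {ε a b : ℝ} (hε : 0 < ε) (hab : a ≤ b)
    (hS : ∀ n ∈ S, (n : ℝ) * ε ∈ Set.Icc a b) : (#S : ℝ) ≤ (b - a) / ε + 1 := by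
  have h := card_le_of_forall_intCast_mem_Icc (S := S.map Nat.castEmbedding)
    (div_le_div_of_nonneg_right hab hε.le) fun n hn => by
      obtain ⟨m, hm, rfl⟩ := mem_map.1 hn
      simpa [le_div_iff₀ hε, div_le_iff₀ hε] using hS m hm
  rwa [card_map, ← sub_div] at h

lemma exists_abs_sub_intCast_le_of_fract {x δ : ℝ}
    (h : Int.fract x ≤ δ ∨ 1 - δ ≤ Int.fract x) : ∃ m : ℤ, |x - m| ≤ δ := by
  rcases h with h | h
  · exact ⟨⌊x⌋, by rwa [Int.self_sub_floor, abs_of_nonneg (Int.fract_nonneg x)]⟩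
  · refine ⟨⌊x⌋ + 1, ?_⟩
    rw [Int.cast_add, Int.cast_one, ← sub_sub, Int.self_sub_floor,
      abs_of_nonpos (by linarith [Int.fract_lt_one x])]
    linarith

lemma card_le_of_forall_exists_abs_mul_sub_intCast_le {ε δ : ℝ} (hε : 0 < ε) (hδ : 0 ≤ δ)
    {N₁ N₂ : ℕ} {B : Finset ℕ} (hB : B ⊆ Ico N₁ N₂)
    (hnear : ∀ n ∈ B, ∃ m : ℤ, |(n : ℝ) * ε - m| ≤ δ) :
    (#B : ℝ) ≤ ((N₂ - N₁ : ℕ) * ε + 2 * δ + 1) * (2 * δ / ε + 1) := by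
  set f : ℕ → ℤ := fun n => round ((n : ℝ) * ε)
  have hf : ∀ n ∈ B, |(n : ℝ) * ε - f n| ≤ δ := fun n hn => by
    obtain ⟨m, hm⟩ := hnear n hn
    exact (round_le _ m).trans hm
  have hfiber : ∀ m : ℤ, (#{n ∈ B | f n = m} : ℝ) ≤ 2 * δ / ε + 1 := fun m => by
    have h := card_le_of_forall_mul_mem_Icc hε (S := {n ∈ B | f n = m}) (a := m - δ)
      (b := m + δ) (by linarith) fun n hn => by
        obtain ⟨hnB, hnm⟩ := mem_filter.1 hn
        have := abs_le.1 (hf n hnB)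
        rw [hnm] at this
        constructor <;> linarith
    convert h using 2
    ring
  have himage : (#(B.image f) : ℝ) ≤ (N₂ - N₁ : ℕ) * ε + 2 * δ + 1 := by
    have h := card_le_of_forall_intCast_mem_Icc (S := B.image f) (a := N₁ * ε - δ)
      (b := (N₁ + (N₂ - N₁ : ℕ)) * ε + δ)
      (by nlinarith [(N₂ - N₁ : ℕ).cast_nonneg (α := ℝ)])
      fun m hm => by
        obtain ⟨n, hnB, rfl⟩ := mem_image.1 hm
        have hn := mem_Ico.1 (hB hnB)
        have h₁ : (N₁ : ℝ) ≤ n := by exact_mod_cast hn.1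
        have h₂ : (n : ℝ) ≤ N₁ + (N₂ - N₁ : ℕ) := by
          exact_mod_cast (by omega : n ≤ N₁ + (N₂ - N₁))
        have := abs_le.1 (hf n hnB)
        constructor <;> nlinarith
    linarith
  calc (#B : ℝ) = ∑ m ∈ B.image f, (#{n ∈ B | f n = m} : ℝ) := by
        exact_mod_cast card_eq_sum_card_image f B
    _ ≤ ∑ _m ∈ B.image f, (2 * δ / ε + 1) := sum_le_sum fun m _ => hfiber m
    _ = #(B.image f) * (2 * δ / ε + 1) := by rw [sum_const, nsmul_eq_mul]
    _ ≤ _ := by gcongr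


/-- counting `n` in an interval with `{n q_j α}` close to `0` or `1`. -/
theorem stmt2 (α : ℝ) (hirr : Irrational α) (hmem : α ∈ Set.Ioo (0:ℝ) 1)
    (δ : ℝ) (hδ : δ ∈ Set.Ioo (0:ℝ) (1/2))
    (N₁ N₂ j : ℕ) (hj : cfDen α (j + 1) ≤ 2 * (N₂ - N₁)) :
    (((Finset.Ico N₁ N₂).filter fun n =>
        Int.fract (((n * cfDen α j : ℕ) : ℝ) * α) ≤ δ ∨
          1 - δ ≤ Int.fract (((n * cfDen α j : ℕ) : ℝ) * α)).card : ℝ)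
      ≤ 20 * (δ + ((cfDen α (j + 1) : ℝ))⁻¹) * ((N₂ - N₁ : ℕ) : ℝ) := by
  obtain ⟨hδ₀, hδ₁⟩ := hδ
  obtain ⟨hQθ₁, hQθ₂⟩ := cfDen_succ_mul_gaussProd_succ_mem_Ioo hirr hmem j
  have hθ : 0 < gaussProd α (j + 1) := gaussProd_pos hirr hmem (j + 1)
  have hQ : (0 : ℝ) < cfDen α (j + 1) := by exact_mod_cast cfDen_pos hirr hmem (j + 1)
  have hQL : (cfDen α (j + 1) : ℝ) ≤ 2 * ((N₂ - N₁ : ℕ) : ℝ) := by exact_mod_cast hj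
  refine (card_le_of_forall_exists_abs_mul_sub_intCast_le hθ hδ₀.le (filter_subset _ _)
    fun n hn => exists_abs_mul_gaussProd_sub_intCast_le hirr hmem
      (exists_abs_sub_intCast_le_of_fract (mem_filter.1 hn).2)).trans ?_
  set θ := gaussProd α (j + 1)
  set Q : ℝ := (cfDen α (j + 1) : ℝ)
  set L : ℝ := ((N₂ - N₁ : ℕ) : ℝ)
  have hL : 0 ≤ L := Nat.cast_nonneg _
  have h₁ : L * θ + 2 * δ + 1 ≤ 5 * (L / Q) := by
    have : L * θ ≤ L / Q := by rw [le_div_iff₀ hQ]; nlinarith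
    have : 1 ≤ 2 * L / Q := (one_le_div hQ).2 hQL
    rw [mul_div_assoc] at this
    linarith
  have h₂ : 2 * δ / θ + 1 ≤ 4 * δ * Q + 1 := by
    gcongr ?_ + 1
    rw [div_le_iff₀ hθ]
    nlinarith
  calc (L * θ + 2 * δ + 1) * (2 * δ / θ + 1) ≤ 5 * (L / Q) * (4 * δ * Q + 1) :=
        mul_le_mul h₁ h₂ (by positivity) (by positivity)
    _ = 20 * δ * L + 5 * (L / Q) := by field_simp; ring
    _ ≤ 20 * (δ + Q⁻¹) * L := by rw [div_eq_mul_inv]; nlinarith [inv_pos.2 hQ]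
end

section
/- Let Λ be a compact topological space and let (F_λ)_{λ∈Λ} be a family of nonnegative continuous functions on the torus 𝕋^d, none identically zero, depending continuously on λ (i.e. (λ, u) ↦ F_λ(u) is continuous). If a sequence (z_n) is equidistributed in 𝕋^d, then there exist N₀ ∈ ℕ and η, θ > 0 such that Card{n ≤ N : F_λ(z_n) ≥ η} ≥ θ·N for all N ≥ N₀ and all λ ∈ Λ. -/
open MeasureTheory Filter
open scoped Classical

/-! The Cesàro averages `g ↦ (1/N) ∑_{n ≤ N} g(z n)` are 1-Lipschitz on `C(𝕋^d, ℝ)`, hence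
equicontinuous, so by Ascoli their pointwise convergence to `∫ g` is uniform on the compact
family `{F_λ}`. As `∫ F_λ` is continuous and positive in `λ`, the averages of `F_λ` along `z` are
eventually `≥ m > 0` uniformly in `λ`. Since `F ≤ M`, a reverse Markov count then shows that at
least a proportion `m / (2M)` of the terms satisfy `F_λ(z n) ≥ m / 2`. -/

open scoped Topology

theorem mul_card_le_card_filter_of_le_sum {ι : Type*} (s : Finset ι) (f : ι → ℝ) {c η M : ℝ}
    (hη : 0 ≤ η) (hM : 0 < M) (hfM : ∀ i ∈ s, f i ≤ M) (hsum : c * s.card ≤ ∑ i ∈ s, f i) :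
    (c - η) / M * s.card ≤ (s.filter fun i => η ≤ f i).card := by
  set t := s.filter fun i => η ≤ f i
  have hlarge : ∑ i ∈ t, f i ≤ M * t.card := by
    simpa [mul_comm] using
      Finset.sum_le_card_nsmul t f M fun i hi => hfM i (Finset.mem_filter.1 hi).1
  have hsmall : ∑ i ∈ s.filter (fun i => ¬ η ≤ f i), f i ≤ η * s.card := by
    calc ∑ i ∈ s.filter (fun i => ¬ η ≤ f i), f i
        ≤ η * (s.filter fun i => ¬ η ≤ f i).card := by
          simpa [mul_comm] using Finset.sum_le_card_nsmul _ f η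
            fun i hi => (not_le.1 (Finset.mem_filter.1 hi).2).le
      _ ≤ η * s.card := by gcongr; exact Finset.filter_subset _ s
  rw [div_mul_eq_mul_div, div_le_iff₀ hM]
  have := Finset.sum_filter_add_sum_filter_not s (fun i => η ≤ f i) f
  nlinarith

section CesaroAverage

variable {X : Type*}

noncomputable def cesaroAvg (z : ℕ → X) (g : X → ℝ) (N : ℕ) : ℝ :=
  (∑ n ∈ Finset.Icc 1 N, g (z n)) / N

variable [TopologicalSpace X] [CompactSpace X] (z : ℕ → X)

theorem lipschitzWith_cesaroAvg (N : ℕ) : LipschitzWith 1 fun g : C(X, ℝ) => cesaroAvg z g N := by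
  refine LipschitzWith.of_dist_le_mul fun g h => ?_
  rcases N.eq_zero_or_pos with rfl | hN
  · simp [cesaroAvg]
  have hN' : (0 : ℝ) < N := by exact_mod_cast hN
  rw [NNReal.coe_one, one_mul, Real.dist_eq, cesaroAvg, cesaroAvg, ← sub_div,
    ← Finset.sum_sub_distrib, abs_div, abs_of_pos hN', div_le_iff₀ hN']
  calc |∑ n ∈ Finset.Icc 1 N, (g (z n) - h (z n))|
      ≤ ∑ n ∈ Finset.Icc 1 N, dist g h := by
        refine (Finset.abs_sum_le_sum_abs _ _).trans (Finset.sum_le_sum fun n _ => ?_)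
        rw [← Real.dist_eq]
        exact ContinuousMap.dist_apply_le_dist _
    _ = dist g h * N := by simp [mul_comm]

variable [MeasurableSpace X] (μ : Measure X)

theorem tendstoUniformly_cesaroAvg {Λ : Type*} [TopologicalSpace Λ] [CompactSpace Λ]
    (hz : ∀ g : X → ℝ, Continuous g → Tendsto (cesaroAvg z g) atTop (𝓝 (∫ u, g u ∂μ)))
    (G : C(Λ, C(X, ℝ))) :
    TendstoUniformly (fun N lam => cesaroAvg z (G lam) N) (fun lam => ∫ u, G lam u ∂μ) atTop := by
  have hequi : Equicontinuous fun N lam => cesaroAvg z (G lam) N :=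
    equicontinuous_iff_continuous.2 <| (uniformEquicontinuous_iff_uniformContinuous.1 <|
      LipschitzWith.uniformEquicontinuous _ 1 (lipschitzWith_cesaroAvg z)).continuous.comp
      G.continuous
  exact UniformFun.tendsto_iff_tendstoUniformly.1 <|
    (hequi.tendsto_uniformFun_iff_pi atTop _).2 <|
      tendsto_pi_nhds.2 fun lam => hz _ (G lam).continuous

theorem eventually_forall_le_cesaroAvg [OpensMeasurableSpace X] [IsFiniteMeasure μ]
    [μ.IsOpenPosMeasure] {Λ : Type*} [TopologicalSpace Λ] [CompactSpace Λ] (F : Λ → X → ℝ)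
    (hFcont : Continuous fun p : Λ × X => F p.1 p.2) (hFnonneg : ∀ lam u, 0 ≤ F lam u)
    (hFne : ∀ lam, ∃ u, F lam u ≠ 0)
    (hz : ∀ g : X → ℝ, Continuous g → Tendsto (cesaroAvg z g) atTop (𝓝 (∫ u, g u ∂μ))) :
    ∃ m > 0, ∀ᶠ N in atTop, ∀ lam, m ≤ cesaroAvg z (F lam) N := by
  let G : C(Λ, C(X, ℝ)) := ContinuousMap.curry ⟨_, hFcont⟩
  have hIpos : ∀ lam, 0 < ∫ u, F lam u ∂μ := fun lam =>
    integral_pos_of_integrable_nonneg_nonzero (G lam).continuous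
      ((G lam).continuous.integrable_of_hasCompactSupport (.of_compactSpace _))
      (hFnonneg lam) (hFne lam).choose_spec
  have hunif : TendstoUniformly (fun N lam => cesaroAvg z (F lam) N)
      (fun lam => ∫ u, F lam u ∂μ) atTop :=
    tendstoUniformly_cesaroAvg z μ hz G
  have hIcont : Continuous fun lam => ∫ u, F lam u ∂μ :=
    hunif.continuous <| Frequently.of_forall fun N =>
      (lipschitzWith_cesaroAvg z N).continuous.comp G.continuous
  obtain ⟨I₀, hI₀, hI₀le⟩ :=
    isCompact_univ.exists_forall_le' hIcont.continuousOn fun lam _ => hIpos lam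
  refine ⟨I₀ / 2, half_pos hI₀, ?_⟩
  filter_upwards [Metric.tendstoUniformly_iff.1 hunif _ (half_pos hI₀)] with N hN lam
  linarith [hI₀le lam (Set.mem_univ _), (abs_lt.1 (hN lam)).2]

end CesaroAverage

/-- uniform positive proportion of visits of an equidistributed sequence
to the set where `F_λ` is bounded away from zero, over a compact parameter space. -/
theorem stmt14 (d : ℕ) {Λ : Type*} [TopologicalSpace Λ] [CompactSpace Λ]
    (F : Λ → (Fin d → AddCircle (1:ℝ)) → ℝ)
    (hFcont : Continuous fun p : Λ × (Fin d → AddCircle (1:ℝ)) => F p.1 p.2)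
    (hFnonneg : ∀ lam u, 0 ≤ F lam u)
    (hFne : ∀ lam, ∃ u, F lam u ≠ 0)
    (z : ℕ → (Fin d → AddCircle (1:ℝ)))
    (hz : ∀ g : (Fin d → AddCircle (1:ℝ)) → ℝ, Continuous g →
      Filter.Tendsto (fun N : ℕ => (∑ n ∈ Finset.Icc 1 N, g (z n)) / (N : ℝ))
        Filter.atTop (nhds (∫ u, g u))) :
    ∃ N₀ : ℕ, ∃ η θ : ℝ, 0 < η ∧ 0 < θ ∧
      ∀ N : ℕ, N₀ ≤ N → ∀ lam : Λ,
        θ * (N : ℝ) ≤ (((Finset.Icc 1 N).filter fun n => η ≤ F lam (z n)).card : ℝ) := by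
  obtain ⟨m, hm, hmavg⟩ := eventually_forall_le_cesaroAvg z volume F hFcont hFnonneg hFne hz
  obtain ⟨N₀, hN₀⟩ := (hmavg.and (eventually_ge_atTop 1)).exists_forall_of_atTop
  obtain ⟨M, hM⟩ := (isCompact_range hFcont).bddAbove
  have hFM : ∀ lam u, F lam u ≤ max M 1 := fun lam u =>
    (hM ⟨(lam, u), rfl⟩).trans (le_max_left _ _)
  refine ⟨N₀, m / 2, (m - m / 2) / max M 1, half_pos hm,
    div_pos (by linarith) (by positivity), fun N hN lam => ?_⟩
  obtain ⟨hmN, hN1⟩ := hN₀ N hN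
  have hcard : ((Finset.Icc 1 N).card : ℝ) = N := by simp
  have hsum : m * (Finset.Icc 1 N).card ≤ ∑ n ∈ Finset.Icc 1 N, F lam (z n) := by
    rw [hcard, ← le_div_iff₀ (by exact_mod_cast hN1)]
    exact hmN lam
  simpa only [hcard] using mul_card_le_card_filter_of_le_sum _ (fun n => F lam (z n))
    (half_pos hm).le (by positivity) (fun n _ => hFM lam (z n)) hsum
end

section
/- Let (u_n) be a sequence of real numbers with 1 ≤ u_n ≤ n^γ for some 0 ≤ γ < 1/3, and let (X_n) be a sequence of uniformly bounded, pairwise orthogonal random variables on a probability space (Ω, μ) (i.e. sup_n ‖X_n‖_∞ < ∞ and ∫ X_n X_m dμ = 0 for n ≠ m). Then (Σ_{k=1}^{N} u_k X_k)/(Σ_{k=1}^{N} u_k) → 0 as N → ∞, μ-almost everywhere. -/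
open MeasureTheory Filter
open scoped Classical

/-!
Orthogonality gives `∫ (∑_{k ≤ N} u_k X_k)² = ∑_{k ≤ N} u_k² ∫ X_k² ≤ M² N^{1+2γ}`, while the
normaliser `∑_{k ≤ N} u_k` is at least `N`; so the weighted mean has mean square `O(N^{2γ-1})`.
Along the cubes `N = j³` this is `O(j^{6γ-3})`, which is summable because `γ < 1/3`, so the weighted
means along the cubes tend to `0` almost surely. For `j³ ≤ N < (j+1)³` the sum moves by at most
`O(j² · j^{3γ})` against a normaliser of size at least `j³`, and `j^{3γ-1} → 0`.
-/

open Finset Topology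

noncomputable def weightedMean (u x : ℕ → ℝ) (N : ℕ) : ℝ :=
  (∑ k ∈ Icc 1 N, u k * x k) / ∑ k ∈ Icc 1 N, u k

section WeightedMean

variable {u x : ℕ → ℝ} {γ M : ℝ}

theorem natCast_le_sum_Icc (hu : ∀ n, 1 ≤ n → 1 ≤ u n) (N : ℕ) :
    (N : ℝ) ≤ ∑ k ∈ Icc 1 N, u k := by
  simpa using card_nsmul_le_sum (Icc 1 N) u 1 fun k hk => hu k (mem_Icc.1 hk).1

theorem monotone_sum_Icc (hu : ∀ n, 1 ≤ n → 1 ≤ u n) : Monotone fun N => ∑ k ∈ Icc 1 N, u k :=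
  fun _ _ h => sum_le_sum_of_subset_of_nonneg (Icc_subset_Icc_right h) fun k hk _ =>
    zero_le_one.trans (hu k (mem_Icc.1 hk).1)

theorem le_natCast_rpow_of_le (hu : ∀ n, 1 ≤ n → u n ≤ (n : ℝ) ^ γ) (hγ : 0 ≤ γ) {k N : ℕ}
    (hk : 1 ≤ k) (hkN : k ≤ N) : u k ≤ (N : ℝ) ^ γ :=
  (hu k hk).trans (Real.rpow_le_rpow (Nat.cast_nonneg _) (Nat.cast_le.2 hkN) hγ)

theorem sum_Icc_sq_le (hu : ∀ n, 1 ≤ n → 1 ≤ u n) (hu' : ∀ n, 1 ≤ n → u n ≤ (n : ℝ) ^ γ)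
    (hγ : 0 ≤ γ) (N : ℕ) : ∑ k ∈ Icc 1 N, u k ^ 2 ≤ N * ((N : ℝ) ^ γ) ^ 2 := by
  simpa using sum_le_card_nsmul (Icc 1 N) (u · ^ 2) (((N : ℝ) ^ γ) ^ 2) fun k hk => by
    obtain ⟨hk, hkN⟩ := mem_Icc.1 hk
    exact pow_le_pow_left₀ (zero_le_one.trans (hu k hk)) (le_natCast_rpow_of_le hu' hγ hk hkN) 2

theorem abs_weightedMean_le_add (hu : ∀ n, 1 ≤ n → 1 ≤ u n)
    (hu' : ∀ n, 1 ≤ n → u n ≤ (n : ℝ) ^ γ) (hγ : 0 ≤ γ) (hx : ∀ k, |x k| ≤ M) {m N : ℕ}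
    (hm : 1 ≤ m) (hmN : m ≤ N) :
    |weightedMean u x N| ≤ |weightedMean u x m| + (N - m) * (N : ℝ) ^ γ * M / m := by
  set U : ℕ → ℝ := fun n => ∑ k ∈ Icc 1 n, u k
  set G := ∑ k ∈ Ioc m N, u k * x k
  have hUm : (m : ℝ) ≤ U m := natCast_le_sum_Icc hu m
  have hUN : U m ≤ U N := monotone_sum_Icc hu hmN
  have hm0 : (0 : ℝ) < m := by exact_mod_cast hm
  have hUN0 : 0 < U N := hm0.trans_le (hUm.trans hUN)
  have hsplit : ∑ k ∈ Icc 1 N, u k * x k = ∑ k ∈ Icc 1 m, u k * x k + G := by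
    have hIcc (n : ℕ) : Icc 1 n = Ioc 0 n := Icc_add_one_left_eq_Ioc 0 n
    rw [hIcc, hIcc, ← sum_Ioc_consecutive _ (Nat.zero_le m) hmN]
  have hG : |G| ≤ (N - m) * (N : ℝ) ^ γ * M := by
    calc |G| ≤ ∑ k ∈ Ioc m N, |u k * x k| := abs_sum_le_sum_abs (fun k => u k * x k) _
      _ ≤ ∑ k ∈ Ioc m N, (N : ℝ) ^ γ * M := sum_le_sum fun k hk => by
          obtain ⟨hmk, hkN⟩ := mem_Ioc.1 hk
          have hk : 1 ≤ k := hm.trans hmk.le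
          rw [abs_mul, abs_of_nonneg (zero_le_one.trans (hu k hk))]
          exact mul_le_mul (le_natCast_rpow_of_le hu' hγ hk hkN) (hx k) (abs_nonneg _)
            (by positivity)
      _ = (N - m) * (N : ℝ) ^ γ * M := by
          rw [sum_const, Nat.card_Ioc, nsmul_eq_mul, Nat.cast_sub hmN, mul_assoc]
  calc |weightedMean u x N| = |∑ k ∈ Icc 1 m, u k * x k + G| / U N := by
        rw [weightedMean, hsplit, abs_div, abs_of_pos hUN0]
    _ ≤ |∑ k ∈ Icc 1 m, u k * x k| / U N + |G| / U N := by
        rw [← add_div]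
        exact div_le_div_of_nonneg_right (abs_add_le _ G) hUN0.le
    _ ≤ |∑ k ∈ Icc 1 m, u k * x k| / U m + (N - m) * (N : ℝ) ^ γ * M / m := by
        refine add_le_add (by gcongr; exact hm0.trans_le hUm) ?_
        exact (div_le_div_of_nonneg_left (abs_nonneg G) hm0 (hUm.trans hUN)).trans
          (div_le_div_of_nonneg_right hG hm0.le)
    _ = |weightedMean u x m| + (N - m) * (N : ℝ) ^ γ * M / m := by
        rw [weightedMean, abs_div, abs_of_pos (hm0.trans_le hUm)]

theorem abs_weightedMean_le_of_cube_le (hu : ∀ n, 1 ≤ n → 1 ≤ u n)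
    (hu' : ∀ n, 1 ≤ n → u n ≤ (n : ℝ) ^ γ) (hγ : 0 ≤ γ) (hx : ∀ k, |x k| ≤ M) {j N : ℕ}
    (hj : 1 ≤ j) (hjN : j ^ 3 ≤ N) (hNj : N < (j + 1) ^ 3) :
    |weightedMean u x N| ≤ |weightedMean u x (j ^ 3)| + 24 * M * ((j : ℝ) + 1) ^ (3 * γ - 1) := by
  refine (abs_weightedMean_le_add hu hu' hγ hx (Nat.one_le_pow _ _ hj) hjN).trans
    (add_le_add_right ?_ _)
  have hNn : (N : ℝ) + 1 ≤ ((j : ℝ) + 1) ^ 3 := by exact_mod_cast Nat.succ_le_of_lt hNj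
  set n : ℝ := (j : ℝ) + 1
  have hM : 0 ≤ M := (abs_nonneg _).trans (hx 0)
  have hj1 : (1 : ℝ) ≤ j := by exact_mod_cast hj
  have hn : 0 < n := by positivity
  have hgap : (N : ℝ) - (j ^ 3 : ℕ) ≤ 3 * n ^ 2 := by push_cast; nlinarith
  have hpow : (N : ℝ) ^ γ ≤ n ^ (3 * γ) := by
    rw [show 3 * γ = ((3 : ℕ) : ℝ) * γ by norm_num, Real.rpow_natCast_mul hn.le]
    exact Real.rpow_le_rpow (Nat.cast_nonneg _) (by linarith) hγ
  have hcube : n ^ 3 / 8 ≤ ((j ^ 3 : ℕ) : ℝ) := by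
    have : n ^ 3 ≤ (2 * j) ^ 3 := pow_le_pow_left₀ hn.le (by linarith) 3
    push_cast
    linarith
  calc ((N : ℝ) - (j ^ 3 : ℕ)) * (N : ℝ) ^ γ * M / (j ^ 3 : ℕ)
      ≤ 3 * n ^ 2 * n ^ (3 * γ) * M / (n ^ 3 / 8) := by
        gcongr
    _ = 24 * M * n ^ (3 * γ - 1) := by
        rw [Real.rpow_sub_one hn.ne']
        field_simp
        ring

theorem tendsto_weightedMean_of_tendsto_cube (hu : ∀ n, 1 ≤ n → 1 ≤ u n)
    (hu' : ∀ n, 1 ≤ n → u n ≤ (n : ℝ) ^ γ) (hγ0 : 0 ≤ γ) (hγ : γ < 1 / 3)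
    (hx : ∀ k, |x k| ≤ M) (h : Tendsto (fun j => weightedMean u x (j ^ 3)) atTop (𝓝 0)) :
    Tendsto (weightedMean u x) atTop (𝓝 0) := by
  have hroot : Tendsto (Nat.nthRoot 3) atTop atTop :=
    tendsto_atTop_atTop.2 fun b => ⟨b ^ 3, fun N hN => (Nat.le_nthRoot_iff three_ne_zero).2 hN⟩
  have hdecay : Tendsto (fun j : ℕ => ((j : ℝ) + 1) ^ (3 * γ - 1)) atTop (𝓝 0) := by
    have := (tendsto_rpow_neg_atTop (by linarith : 0 < 1 - 3 * γ)).comp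
      (tendsto_atTop_add_const_right _ 1 tendsto_natCast_atTop_atTop)
    simpa [Function.comp_def] using this
  have hbound := ((h.comp hroot).abs).add ((hdecay.comp hroot).const_mul (24 * M))
  rw [abs_zero, mul_zero, add_zero] at hbound
  refine squeeze_zero_norm' ?_ hbound
  filter_upwards [eventually_ge_atTop 1] with N hN
  exact abs_weightedMean_le_of_cube_le hu hu' hγ0 hx
    ((Nat.le_nthRoot_iff three_ne_zero).2 hN) (Nat.pow_nthRoot_le_iff.2 (Or.inl three_ne_zero))
    (Nat.lt_pow_nthRoot_add_one three_ne_zero N)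

end WeightedMean

section Orthogonal

variable {Ω : Type*} [MeasurableSpace Ω] {μ : Measure Ω}

theorem integral_sq_sum_of_orthogonal {ι : Type*} {X : ι → Ω → ℝ} (hX : ∀ i, MemLp (X i) 2 μ)
    (horth : Pairwise fun i j => ∫ ω, X i ω * X j ω ∂μ = 0) (s : Finset ι) (c : ι → ℝ) :
    ∫ ω, (∑ i ∈ s, c i * X i ω) ^ 2 ∂μ = ∑ i ∈ s, c i ^ 2 * ∫ ω, X i ω ^ 2 ∂μ := by
  have hint (i j : ι) : Integrable (fun ω => X i ω * X j ω) μ := (hX i).integrable_mul (hX j)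
  calc ∫ ω, (∑ i ∈ s, c i * X i ω) ^ 2 ∂μ
      = ∫ ω, ∑ i ∈ s, ∑ j ∈ s, c i * c j * (X i ω * X j ω) ∂μ := by
        congr with ω
        rw [sq, sum_mul_sum]
        exact sum_congr rfl fun i _ => sum_congr rfl fun j _ => by ring
    _ = ∑ i ∈ s, ∑ j ∈ s, c i * c j * ∫ ω, X i ω * X j ω ∂μ := by
        rw [integral_finsetSum _ fun i _ => integrable_finsetSum _ fun j _ =>
          (hint i j).const_mul _]
        refine sum_congr rfl fun i _ => ?_
        rw [integral_finsetSum _ fun j _ => (hint i j).const_mul _]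
        simp only [integral_const_mul]
    _ = ∑ i ∈ s, c i ^ 2 * ∫ ω, X i ω ^ 2 ∂μ := by
        refine sum_congr rfl fun i hi => ?_
        rw [sum_eq_single_of_mem i hi fun j _ hji => by rw [horth hji.symm, mul_zero]]
        simp only [sq]

theorem ae_tendsto_zero_of_summable_integral_sq {Y : ℕ → Ω → ℝ} (hY : ∀ j, MemLp (Y j) 2 μ)
    (hsum : Summable fun j => ∫ ω, Y j ω ^ 2 ∂μ) :
    ∀ᵐ ω ∂μ, Tendsto (fun j => Y j ω) atTop (𝓝 0) := by
  have hint (j : ℕ) : Integrable (fun ω => Y j ω ^ 2) μ := (hY j).integrable_sq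
  have hfin : ∑' j, eLpNorm (fun ω => Y j ω ^ 2) 1 μ ≠ ⊤ := by
    simp_rw [eLpNorm_one_eq_lintegral_enorm, ← ofReal_integral_norm_eq_lintegral_enorm (hint _),
      Real.norm_eq_abs, abs_sq]
    rw [← ENNReal.ofReal_tsum_of_nonneg (fun j => integral_nonneg fun ω => sq_nonneg _) hsum]
    exact ENNReal.ofReal_ne_top
  filter_upwards [summable_norm_of_tsum_eLpNorm_ne_top le_rfl
    (fun j => (hint j).aestronglyMeasurable) hfin] with ω hω
  have hsq : Tendsto (fun j => Y j ω ^ 2) atTop (𝓝 0) :=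
    tendsto_zero_iff_norm_tendsto_zero.2 hω.tendsto_atTop_zero
  have habs : Tendsto (fun j => |Y j ω|) atTop (𝓝 0) := by
    simpa [Real.sqrt_sq_eq_abs] using hsq.sqrt
  exact (tendsto_zero_iff_abs_tendsto_zero _).2 habs

variable {X : ℕ → Ω → ℝ} {u : ℕ → ℝ} {γ C : ℝ}

theorem integral_sq_weightedMean_le (hX : ∀ n, MemLp (X n) 2 μ)
    (hXC : ∀ n, ∫ ω, X n ω ^ 2 ∂μ ≤ C)
    (horth : Pairwise fun n m => ∫ ω, X n ω * X m ω ∂μ = 0) (hu : ∀ n, 1 ≤ n → 1 ≤ u n)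
    (hu' : ∀ n, 1 ≤ n → u n ≤ (n : ℝ) ^ γ) (hγ : 0 ≤ γ) (N : ℕ) :
    ∫ ω, weightedMean u (X · ω) N ^ 2 ∂μ ≤ C * (N : ℝ) ^ (2 * γ - 1) := by
  have hC : 0 ≤ C := (integral_nonneg fun ω => sq_nonneg _).trans (hXC 0)
  rcases N.eq_zero_or_pos with rfl | hN
  · simpa [weightedMean] using mul_nonneg hC (Real.rpow_nonneg le_rfl (2 * γ - 1))
  have hN0 : (0 : ℝ) < N := by exact_mod_cast hN
  have hU : (N : ℝ) ≤ ∑ k ∈ Icc 1 N, u k := natCast_le_sum_Icc hu N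
  calc ∫ ω, weightedMean u (X · ω) N ^ 2 ∂μ
      = (∑ k ∈ Icc 1 N, u k ^ 2 * ∫ ω, X k ω ^ 2 ∂μ) / (∑ k ∈ Icc 1 N, u k) ^ 2 := by
        simp only [weightedMean, div_pow]
        rw [integral_div, integral_sq_sum_of_orthogonal hX horth]
    _ ≤ (∑ k ∈ Icc 1 N, u k ^ 2) * C / (N : ℝ) ^ 2 := by
        rw [sum_mul]
        gcongr with k
        exact hXC k
    _ ≤ N * ((N : ℝ) ^ γ) ^ 2 * C / (N : ℝ) ^ 2 := by
        gcongr
        exact sum_Icc_sq_le hu hu' hγ N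
    _ = C * (N : ℝ) ^ (2 * γ - 1) := by
        rw [Real.rpow_sub_one hN0.ne', mul_comm 2 γ, Real.rpow_mul hN0.le, Real.rpow_two]
        field_simp

theorem ae_tendsto_weightedMean_cube (hX : ∀ n, MemLp (X n) 2 μ)
    (hXC : ∀ n, ∫ ω, X n ω ^ 2 ∂μ ≤ C)
    (horth : Pairwise fun n m => ∫ ω, X n ω * X m ω ∂μ = 0) (hu : ∀ n, 1 ≤ n → 1 ≤ u n)
    (hu' : ∀ n, 1 ≤ n → u n ≤ (n : ℝ) ^ γ) (hγ0 : 0 ≤ γ) (hγ : γ < 1 / 3) :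
    ∀ᵐ ω ∂μ, Tendsto (fun j => weightedMean u (X · ω) (j ^ 3)) atTop (𝓝 0) := by
  refine ae_tendsto_zero_of_summable_integral_sq (fun j => ?_) ?_
  · simp only [weightedMean, div_eq_mul_inv]
    exact (memLp_finsetSum _ fun k _ => (hX k).const_mul (u k)).mul_const _
  · refine Summable.of_nonneg_of_le (fun j => integral_nonneg fun ω => sq_nonneg _)
      (fun j => integral_sq_weightedMean_le hX hXC horth hu hu' hγ0 (j ^ 3)) ?_
    simp_rw [Nat.cast_pow, ← Real.rpow_natCast_mul (Nat.cast_nonneg _)]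
    exact (Real.summable_nat_rpow.2 (by push_cast; linarith)).mul_left C

end Orthogonal

/-- strong law of large numbers for weighted sums of bounded orthogonal
random variables. -/
theorem stmt19 {Ω : Type*} [MeasurableSpace Ω] (μ : Measure Ω) [IsProbabilityMeasure μ]
    (γ : ℝ) (hγ0 : 0 ≤ γ) (hγ : γ < 1/3)
    (u : ℕ → ℝ) (hu : ∀ n : ℕ, 1 ≤ n → 1 ≤ u n ∧ u n ≤ (n : ℝ) ^ γ)
    (X : ℕ → Ω → ℝ) (hmeas : ∀ n, Measurable (X n))
    (hbdd : ∃ M : ℝ, ∀ n ω, |X n ω| ≤ M)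
    (horth : ∀ n m : ℕ, n ≠ m → ∫ ω, X n ω * X m ω ∂μ = 0) :
    ∀ᵐ ω ∂μ, Filter.Tendsto
      (fun N : ℕ => (∑ k ∈ Finset.Icc 1 N, u k * X k ω) / (∑ k ∈ Finset.Icc 1 N, u k))
      Filter.atTop (nhds 0) := by
  obtain ⟨M, hM⟩ := hbdd
  have hX : ∀ n, MemLp (X n) 2 μ := fun n =>
    MemLp.of_bound (hmeas n).aestronglyMeasurable M (ae_of_all _ (hM n))
  have hXM : ∀ n, ∫ ω, X n ω ^ 2 ∂μ ≤ M ^ 2 := fun n => by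
    calc ∫ ω, X n ω ^ 2 ∂μ ≤ ∫ _, M ^ 2 ∂μ :=
          integral_mono (hX n).integrable_sq (integrable_const _) fun ω =>
            sq_le_sq' (abs_le.1 (hM n ω)).1 (abs_le.1 (hM n ω)).2
      _ = M ^ 2 := by simp
  have hu₁ : ∀ n, 1 ≤ n → 1 ≤ u n := fun n hn => (hu n hn).1
  have hu₂ : ∀ n, 1 ≤ n → u n ≤ (n : ℝ) ^ γ := fun n hn => (hu n hn).2
  filter_upwards [ae_tendsto_weightedMean_cube hX hXM horth hu₁ hu₂ hγ0 hγ] with ω hω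
  exact tendsto_weightedMean_of_tendsto_cube hu₁ hu₂ hγ0 hγ (hM · ω) hω
end
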